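/- Assume that for every integer m ≥ 4 and every graph G with χ(G) ≥ m, if u, v are nonadjacent vertices such that every proper coloring of G with χ(G) colors assigns u and v different colors, then G contains a 3-connected subgraph with chromatic number at least m. Then for every m ≥ 4, every graph with chromatic number at least m + 1 contains a 3-connected subgraph with chromatic number at least m (i.e., g(2,m) = m + 1). -/

import Mathlib

/-- `G` is `n`-connected: it has more than `n` vertices and no cutset of fewer than `n`
vertices. -/
def KConnected {V : Type*} (G : SimpleGraph V) (n : ℕ) : Prop :=
  n < Nat.card V ∧ ∀ X : Set V, X.ncard < n →
    ¬ ∃ A B : Set V, A.Nonempty ∧ B.Nonempty ∧ Disjoint A B ∧ A ∪ B = Xᶜ ∧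
        ∀ a ∈ A, ∀ b ∈ B, ¬ G.Adj a b

/-!
Induct on the number of vertices of a graph `G` that is not `m`-colorable. If `G` is not
`3`-connected, a cut `X` with `|X| ≤ 2` splits it into `G₁ = G[A ∪ X]` and `G₂ = G[B ∪ X]`.
If one side is not `m`-colorable we recurse into it. Otherwise, `m`-colorings of the two
sides that induce the same partition of `X` glue, after permuting colors, to an
`m`-coloring of `G`. As `|X| ≤ 2`, this forces `X = {x, y}` with `x, y` nonadjacent and
separated by every `m`-coloring of one side. That side has chromatic number exactly `m`
(from an `(m - 1)`-coloring, give `x` and `y` a fresh common color), so the conjecture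
applies to it.
-/

open SimpleGraph Set

lemma Equiv.Perm.exists_comp_eq_of_eq_iff_eq {ι α : Type*} [Finite α] {f g : ι → α}
    (h : ∀ i j, g i = g j ↔ f i = f j) : ∃ σ : Equiv.Perm α, σ ∘ g = f := by
  classical
  let e : range g ≃ range f :=
    (Setoid.quotientKerEquivRange g).symm.trans
      ((Quotient.congrRight h).trans (Setoid.quotientKerEquivRange f))
  refine ⟨e.extendSubtype, funext fun i => ?_⟩
  rw [Function.comp_apply, Equiv.extendSubtype_apply_of_mem e _ ⟨i, rfl⟩]
  have : (⟨g i, i, rfl⟩ : range g) = Setoid.quotientKerEquivRange g ⟦i⟧ := rfl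
  rw [this]
  simp only [e, Equiv.trans_apply, Equiv.symm_apply_apply]
  rfl

lemma KConnected.of_iso {V W : Type*} {G : SimpleGraph V} {G' : SimpleGraph W} {k : ℕ}
    (e : G ≃g G') (h : KConnected G k) : KConnected G' k := by
  obtain ⟨hcard, hsep⟩ := h
  refine ⟨by rwa [← Nat.card_congr e.toEquiv], ?_⟩
  rintro X hX ⟨A, B, hA, hB, hAB, hU, hadj⟩
  have hinj : Function.Injective e.symm := e.symm.injective
  refine hsep (e.symm '' X) (by rwa [ncard_image_of_injective _ hinj])
    ⟨e.symm '' A, e.symm '' B, hA.image _, hB.image _, (disjoint_image_iff hinj).2 hAB, ?_, ?_⟩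
  · rw [← image_union, hU, image_compl_eq e.symm.bijective]
  · rintro _ ⟨a, ha, rfl⟩ _ ⟨b, hb, rfl⟩ hab
    exact hadj a ha b hb (e.symm.map_adj_iff.1 hab)

namespace SimpleGraph

variable {V W α : Type*} {G : SimpleGraph V} {G' : SimpleGraph W} {k m : ℕ}

def HasKConnectedSubgraph (G : SimpleGraph V) (k m : ℕ) : Prop :=
  ∃ H : G.Subgraph, KConnected H.coe k ∧ (m : ℕ∞) ≤ H.coe.chromaticNumber

lemma HasKConnectedSubgraph.of_kConnected (hG : KConnected G k)
    (hm : (m : ℕ∞) ≤ G.chromaticNumber) : G.HasKConnectedSubgraph k m :=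
  ⟨⊤, hG.of_iso Subgraph.topIso.symm, by rwa [chromaticNumber_congr Subgraph.topIso]⟩

lemma HasKConnectedSubgraph.map (f : Copy G G') :
    G.HasKConnectedSubgraph k m → G'.HasKConnectedSubgraph k m
  | ⟨H, hk, hm⟩ => ⟨H.map f.toHom, hk.of_iso (f.isoSubgraphMap H),
      by rwa [← chromaticNumber_congr (f.isoSubgraphMap H)]⟩

lemma add_one_le_chromaticNumber_iff {n : ℕ} :
    (n : ℕ∞) + 1 ≤ G.chromaticNumber ↔ ¬ G.Colorable n := by
  rw [ENat.add_one_le_iff (ENat.natCast_ne_top n), ← not_le, chromaticNumber_le_iff_colorable]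

lemma not_colorable_of_forall_coloring_ne {n : ℕ} {u v : V} (huv : ¬ G.Adj u v)
    (h : ∀ C : G.Coloring (Fin (n + 1)), C u ≠ C v) : ¬ G.Colorable n := by
  classical
  rintro ⟨C⟩
  let c : V → Fin (n + 1) := fun z => if z = u ∨ z = v then Fin.last n else (C z).castSucc
  have hc : ∀ {a b}, G.Adj a b → c a ≠ c b := by
    intro a b hab
    by_cases ha : a = u ∨ a = v <;> by_cases hb : b = u ∨ b = v <;>
      simp only [c, ha, hb, if_true, if_false]
    · rcases ha with rfl | rfl <;> rcases hb with rfl | rfl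
      exacts [absurd rfl hab.ne, absurd hab huv, absurd hab.symm huv, absurd rfl hab.ne]
    · exact (Fin.castSucc_ne_last _).symm
    · exact Fin.castSucc_ne_last _
    · exact Fin.castSucc_injective n |>.ne (C.valid hab)
  exact h (Coloring.mk c hc) (show c u = c v by simp [c])

section Separation

variable {X A B : Set V} (hU : A ∪ B = Xᶜ) (hAB : ∀ a ∈ A, ∀ b ∈ B, ¬ G.Adj a b)
include hU hAB

lemma nonempty_coloring_of_separation (C₁ : (G.induce (A ∪ X)).Coloring α)
    (C₂ : (G.induce (B ∪ X)).Coloring α)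
    (h : ∀ x (hx : x ∈ X), C₁ ⟨x, .inr hx⟩ = C₂ ⟨x, .inr hx⟩) : Nonempty (G.Coloring α) := by
  classical
  have mem_B : ∀ z, z ∉ A ∪ X → z ∈ B := fun z hz => by
    have : z ∈ A ∪ B := hU ▸ fun hzX => hz (.inr hzX)
    exact this.resolve_left fun hzA => hz (.inl hzA)
  have mem_X : ∀ a b, a ∈ A ∪ X → b ∉ A ∪ X → G.Adj a b → a ∈ X := fun a b ha hb hab =>
    ha.resolve_left fun haA => hAB a haA b (mem_B b hb) hab
  refine ⟨Coloring.mk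
    (fun z => if hz : z ∈ A ∪ X then C₁ ⟨z, hz⟩ else C₂ ⟨z, .inl (mem_B z hz)⟩) ?_⟩
  intro a b hab
  by_cases ha : a ∈ A ∪ X <;> by_cases hb : b ∈ A ∪ X <;> simp only [ha, hb, dif_pos]
  · exact C₁.valid hab
  · rw [h a (mem_X a b ha hb hab)]
    exact C₂.valid hab
  · rw [h b (mem_X b a hb ha hab.symm)]
    exact C₂.valid hab
  · exact C₂.valid hab

lemma nonempty_coloring_of_separation_of_eq_iff_eq [Finite α]
    (C₁ : (G.induce (A ∪ X)).Coloring α) (C₂ : (G.induce (B ∪ X)).Coloring α)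
    (h : ∀ x (hx : x ∈ X) y (hy : y ∈ X),
      C₁ ⟨x, .inr hx⟩ = C₁ ⟨y, .inr hy⟩ ↔ C₂ ⟨x, .inr hx⟩ = C₂ ⟨y, .inr hy⟩) :
    Nonempty (G.Coloring α) := by
  obtain ⟨σ, hσ⟩ := Equiv.Perm.exists_comp_eq_of_eq_iff_eq (ι := X)
    (f := fun x => C₁ ⟨x, .inr x.2⟩) (g := fun x => C₂ ⟨x, .inr x.2⟩)
    fun x y => (h x x.2 y y.2).symm
  exact nonempty_coloring_of_separation hU hAB C₁ ((Iso.completeGraph σ).toHom.comp C₂)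
    fun x hx => (congrFun hσ ⟨x, hx⟩).symm

lemma exists_forall_coloring_ne_of_separation [Finite V] [Finite α] (hX : X.ncard ≤ 2)
    (h₁ : Nonempty ((G.induce (A ∪ X)).Coloring α))
    (h₂ : Nonempty ((G.induce (B ∪ X)).Coloring α)) (hG : IsEmpty (G.Coloring α)) :
    ∃ S : Set V, Nonempty ((G.induce S).Coloring α) ∧
      ∃ u v : S, ¬ (G.induce S).Adj u v ∧ ∀ C : (G.induce S).Coloring α, C u ≠ C v := by
  obtain ⟨C₁⟩ := h₁
  obtain ⟨C₂⟩ := h₂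
  have hpattern := fun D₁ D₂ h =>
    hG.false (nonempty_coloring_of_separation_of_eq_iff_eq hU hAB D₁ D₂ h).some
  obtain ⟨x, hx, y, hy, hxy⟩ : ∃ x, ∃ hx : x ∈ X, ∃ y, ∃ hy : y ∈ X,
      ¬ (C₁ ⟨x, .inr hx⟩ = C₁ ⟨y, .inr hy⟩ ↔ C₂ ⟨x, .inr hx⟩ = C₂ ⟨y, .inr hy⟩) := by
    by_contra! h
    exact hpattern C₁ C₂ h
  have hne : x ≠ y := by
    rintro rfl
    exact hxy (by simp)
  have hadj : ¬ G.Adj x y := fun h => hxy (iff_of_false (C₁.valid h) (C₂.valid h))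
  have hX : {x, y} = X :=
    eq_of_subset_of_ncard_le (pair_subset hx hy) (by rwa [ncard_pair hne])
  subst hX
  have key : ∀ (D₁ : (G.induce (A ∪ {x, y})).Coloring α)
      (D₂ : (G.induce (B ∪ {x, y})).Coloring α), ¬ (D₁ ⟨x, .inr hx⟩ = D₁ ⟨y, .inr hy⟩ ↔
      D₂ ⟨x, .inr hx⟩ = D₂ ⟨y, .inr hy⟩) := by
    intro D₁ D₂ h
    refine hpattern D₁ D₂ fun z hz w hw => ?_
    rcases hz with rfl | rfl <;> rcases hw with rfl | rfl
    exacts [by simp, h, by simpa only [eq_comm] using h, by simp]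
  by_cases hc : C₁ ⟨x, .inr hx⟩ = C₁ ⟨y, .inr hy⟩
  · exact ⟨_, ⟨C₂⟩, ⟨x, .inr hx⟩, ⟨y, .inr hy⟩, hadj, fun D hD => key C₁ D (iff_of_true hc hD)⟩
  · have hc₂ : C₂ ⟨x, .inr hx⟩ = C₂ ⟨y, .inr hy⟩ := by
      by_contra hc₂
      exact key C₁ C₂ (iff_of_false hc hc₂)
    exact ⟨_, ⟨C₁⟩, ⟨x, .inr hx⟩, ⟨y, .inr hy⟩, hadj, fun D hD => key D C₂ (iff_of_true hD hc₂)⟩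

end Separation

def OptimalColoringConjecture : Prop :=
  ∀ (V : Type) [Fintype V] (G : SimpleGraph V) (m : ℕ), 4 ≤ m →
    (m : ℕ∞) ≤ G.chromaticNumber → ∀ u v : V, u ≠ v → ¬ G.Adj u v →
      (∀ f : V → ℕ, (∀ ⦃a b⦄, G.Adj a b → f a ≠ f b) →
        (∀ x, (f x : ℕ∞) < G.chromaticNumber) → f u ≠ f v) →
      G.HasKConnectedSubgraph 3 m

namespace OptimalColoringConjecture

variable (hyp : OptimalColoringConjecture) {m : ℕ} (hm : 4 ≤ m)
include hyp hm

lemma hasKConnectedSubgraph_of_forall_coloring_ne {V : Type} [Finite V] {G : SimpleGraph V}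
    (hG : G.Colorable m) {u v : V} (hadj : ¬ G.Adj u v)
    (hsep : ∀ C : G.Coloring (Fin m), C u ≠ C v) : G.HasKConnectedSubgraph 3 m := by
  obtain ⟨n, rfl⟩ : ∃ n, m = n + 1 := ⟨m - 1, by omega⟩
  have hχ : G.chromaticNumber = (n + 1 : ℕ) := by
    rw [Nat.cast_add_one, chromaticNumber_eq_iff_colorable_not_colorable]
    exact ⟨hG, not_colorable_of_forall_coloring_ne hadj hsep⟩
  have huv : u ≠ v := by
    rintro rfl
    exact hsep hG.some rfl
  have : Fintype V := Fintype.ofFinite V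
  refine hyp V G (n + 1) hm hχ.ge u v huv hadj fun f hf hlt hfuv => ?_
  have hlt' : ∀ z, f z < n + 1 := fun z => by exact_mod_cast hχ ▸ hlt z
  exact hsep (Coloring.mk (fun z => ⟨f z, hlt' z⟩) fun h hc => hf h (congrArg Fin.val hc))
    (Fin.ext hfuv)

theorem hasKConnectedSubgraph_of_not_colorable {V : Type} [Finite V] (G : SimpleGraph V)
    (hG : ¬ G.Colorable m) : G.HasKConnectedSubgraph 3 m := by
  induction hn : Nat.card V using Nat.strong_induction_on generalizing V with
  | _ n ih =>
  by_cases hK : KConnected G 3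
  · exact .of_kConnected hK (le_self_add.trans (add_one_le_chromaticNumber_iff.2 hG))
  have hcard : 3 < Nat.card V := by
    by_contra! h
    have : Fintype V := Fintype.ofFinite V
    exact hG (G.colorable_of_fintype.mono (by rw [← Nat.card_eq_fintype_card]; omega))
  obtain ⟨X, hX, A, B, ⟨a, ha⟩, ⟨b, hb⟩, hdisj, hU, hAB⟩ : ∃ X : Set V, X.ncard < 3 ∧
      ∃ A B : Set V, A.Nonempty ∧ B.Nonempty ∧ Disjoint A B ∧ A ∪ B = Xᶜ ∧
        ∀ a ∈ A, ∀ b ∈ B, ¬ G.Adj a b := by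
    simpa [KConnected, hcard] using hK
  have of_side : ∀ S : Set V, ∀ z ∉ S, ¬ (G.induce S).Colorable m →
      G.HasKConnectedSubgraph 3 m := fun S z hz hS => by
    have hS_lt : Nat.card S < n :=
      hn ▸ Nat.card_coe_set_eq S ▸ ncard_lt_card ((ne_univ_iff_exists_notMem S).2 ⟨z, hz⟩)
    exact (ih _ hS_lt (G.induce S) hS rfl).map (Copy.induce G S)
  have not_mem_X : ∀ z ∈ A ∪ B, z ∉ X := fun z hz => by rwa [hU] at hz
  by_cases h₁ : (G.induce (A ∪ X)).Colorable m
  swap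
  · refine of_side _ b ?_ h₁
    rintro (hbA | hbX)
    exacts [Set.disjoint_left.1 hdisj hbA hb, not_mem_X b (.inr hb) hbX]
  by_cases h₂ : (G.induce (B ∪ X)).Colorable m
  swap
  · refine of_side _ a ?_ h₂
    rintro (haB | haX)
    exacts [Set.disjoint_left.1 hdisj ha haB, not_mem_X a (.inl ha) haX]
  obtain ⟨S, hS, u, v, hadj, hsep⟩ :=
    exists_forall_coloring_ne_of_separation hU hAB (by omega) h₁ h₂ (not_nonempty_iff.1 hG)
  exact (hyp.hasKConnectedSubgraph_of_forall_coloring_ne hm hS hadj hsep).map (Copy.induce G S)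

end OptimalColoringConjecture

end SimpleGraph

/-- Assume that for every `m ≥ 4` and every graph `G` with `χ(G) ≥ m`, whenever `u, v`
are distinct nonadjacent vertices such that every optimal (proper, `χ(G)`-color)
coloring of `G` assigns `u` and `v` different colors, `G` contains a `3`-connected
subgraph with chromatic number at least `m`.  Then for every `m ≥ 4`, every graph with
chromatic number at least `m + 1` contains a `3`-connected subgraph with chromatic
number at least `m` (that is, `g(2, m) = m + 1`). -/
theorem g_two_eq_of_conjecture
    (hyp : ∀ (V : Type) (_ : Fintype V) (G : SimpleGraph V) (m : ℕ), 4 ≤ m →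
      ((m : ℕ∞) ≤ G.chromaticNumber) →
      ∀ u v : V, u ≠ v → ¬ G.Adj u v →
        (∀ f : V → ℕ, (∀ ⦃a b⦄, G.Adj a b → f a ≠ f b) →
          (∀ x, ((f x : ℕ∞) < G.chromaticNumber)) → f u ≠ f v) →
        ∃ H : G.Subgraph, KConnected H.coe 3 ∧ (m : ℕ∞) ≤ H.coe.chromaticNumber) :
    ∀ (V : Type) (_ : Fintype V) (G : SimpleGraph V) (m : ℕ), 4 ≤ m →
      ((m : ℕ∞) + 1 ≤ G.chromaticNumber) →
      ∃ H : G.Subgraph, KConnected H.coe 3 ∧ (m : ℕ∞) ≤ H.coe.chromaticNumber :=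
  fun _ _ G _ hm hχ =>
    OptimalColoringConjecture.hasKConnectedSubgraph_of_not_colorable hyp hm G
      (add_one_le_chromaticNumber_iff.1 hχ)
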